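/- arXiv:1807.08398 — 3 statements merged into one kernel-verified Lean document; each statement's English description precedes it below -/
import Mathlib

section
/- Let (V, ⟨·,·⟩) be a finite-dimensional real inner product space with norm ‖·‖, and let W ∈ V with ‖W‖ < 1. Then for every v ∈ V with v ≠ 0 there exists a unique positive real number Z(v) satisfying the Zermelo equation ‖v/Z(v) − W‖ = 1, and it is given explicitly by Z(v) = (√(⟨W,v⟩² + (1 − ‖W‖²)‖v‖²) − ⟨W,v⟩)/(1 − ‖W‖²). Moreover the resulting function Z is C^∞ on V \ {0}, satisfies Z(λv) = λZ(v) for all λ > 0 and v ≠ 0, and Z(v) > 0 for all v ≠ 0. -/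
open scoped RealInnerProductSpace
open Classical

/-- The Randers norm with Zermelo data `(⟪·,·⟫, W)` on a real inner product space:
`Z(0) = 0` and, for `v ≠ 0`,
`Z(v) = (√(⟪W,v⟫² + (1 − ‖W‖²)‖v‖²) − ⟪W,v⟫)/(1 − ‖W‖²)`. -/
noncomputable def randers {V : Type*} [NormedAddCommGroup V] [InnerProductSpace ℝ V]
    (W : V) (v : V) : ℝ :=
  if v = 0 then 0
  else (Real.sqrt (⟪W, v⟫ ^ 2 + (1 - ‖W‖ ^ 2) * ‖v‖ ^ 2) - ⟪W, v⟫) / (1 - ‖W‖ ^ 2)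

/-- The fundamental tensor of a (Minkowski) norm `F` at the point `v`, evaluated on the
pair of vectors `(u, w)`: one half of the second Fréchet derivative of `F²` at `v`. -/
noncomputable def fundamentalTensor {V : Type*} [NormedAddCommGroup V] [NormedSpace ℝ V]
    (F : V → ℝ) (v u w : V) : ℝ :=
  (1 / 2) * iteratedFDeriv ℝ 2 (fun x => F x ^ 2) v ![u, w]

/-- For a wind `W` with `‖W‖ < 1`: for every `v ≠ 0` the value `randers W v` is the
unique positive solution `z` of the Zermelo equation `‖v/z − W‖ = 1`; moreover the
resulting function is smooth away from the origin, positively homogeneous of degree one,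
and positive on nonzero vectors. -/
theorem randers_spec {V : Type*} [NormedAddCommGroup V] [InnerProductSpace ℝ V]
    [FiniteDimensional ℝ V] (W : V) (hW : ‖W‖ < 1) :
    (∀ v : V, v ≠ 0 →
        (0 < randers W v ∧ ‖(randers W v)⁻¹ • v - W‖ = 1) ∧
          ∀ z : ℝ, 0 < z → ‖z⁻¹ • v - W‖ = 1 → z = randers W v) ∧
      ContDiffOn ℝ (⊤ : ℕ∞) (randers W) {(0 : V)}ᶜ ∧
      (∀ c : ℝ, 0 < c → ∀ v : V, v ≠ 0 → randers W (c • v) = c * randers W v) := by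
  have hc : 0 < 1 - ‖W‖ ^ 2 := by nlinarith [norm_nonneg W]
  -- basic facts for v ≠ 0
  have hD : ∀ v : V, v ≠ 0 → 0 < ⟪W, v⟫ ^ 2 + (1 - ‖W‖ ^ 2) * ‖v‖ ^ 2 := by
    intro v hv
    have hv' : 0 < ‖v‖ := norm_pos_iff.mpr hv
    have := mul_pos hc (pow_pos hv' 2)
    nlinarith [sq_nonneg ⟪W, v⟫]
  have hsD : ∀ v : V, v ≠ 0 → ⟪W, v⟫ < Real.sqrt (⟪W, v⟫ ^ 2 + (1 - ‖W‖ ^ 2) * ‖v‖ ^ 2) := by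
    intro v hv
    have h1 := Real.sq_sqrt (hD v hv).le
    have h2 := Real.sqrt_nonneg (⟪W, v⟫ ^ 2 + (1 - ‖W‖ ^ 2) * ‖v‖ ^ 2)
    have hv' : 0 < ‖v‖ := norm_pos_iff.mpr hv
    by_contra h
    push_neg at h
    have h3 : Real.sqrt (⟪W, v⟫ ^ 2 + (1 - ‖W‖ ^ 2) * ‖v‖ ^ 2) ^ 2 ≤ ⟪W, v⟫ ^ 2 :=
      pow_le_pow_left₀ h2 h 2
    have := mul_pos hc (pow_pos hv' 2)
    linarith
  have hsD' : ∀ v : V, v ≠ 0 → -⟪W, v⟫ < Real.sqrt (⟪W, v⟫ ^ 2 + (1 - ‖W‖ ^ 2) * ‖v‖ ^ 2) := by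
    intro v hv
    have h1 := Real.sq_sqrt (hD v hv).le
    have h2 := Real.sqrt_nonneg (⟪W, v⟫ ^ 2 + (1 - ‖W‖ ^ 2) * ‖v‖ ^ 2)
    have hv' : 0 < ‖v‖ := norm_pos_iff.mpr hv
    by_contra h
    push_neg at h
    have h3 : Real.sqrt (⟪W, v⟫ ^ 2 + (1 - ‖W‖ ^ 2) * ‖v‖ ^ 2) ^ 2 ≤ (-⟪W, v⟫) ^ 2 :=
      pow_le_pow_left₀ h2 h 2
    have := mul_pos hc (pow_pos hv' 2)
    nlinarith
  have hval : ∀ v : V, v ≠ 0 → randers W v =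
      (Real.sqrt (⟪W, v⟫ ^ 2 + (1 - ‖W‖ ^ 2) * ‖v‖ ^ 2) - ⟪W, v⟫) / (1 - ‖W‖ ^ 2) := by
    intro v hv; simp [randers, hv]
  have hpos : ∀ v : V, v ≠ 0 → 0 < randers W v := by
    intro v hv
    rw [hval v hv]
    exact div_pos (sub_pos.mpr (hsD v hv)) hc
  -- Zermelo equation characterization
  have key : ∀ v : V, ∀ z : ℝ, 0 < z →
      (‖z⁻¹ • v - W‖ = 1 ↔
        (1 - ‖W‖ ^ 2) * z ^ 2 + 2 * ⟪W, v⟫ * z - ‖v‖ ^ 2 = 0) := by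
    intro v z hz
    have hz0 : z ≠ 0 := hz.ne'
    have hns : ‖z⁻¹ • v - W‖ ^ 2 = z⁻¹ ^ 2 * ‖v‖ ^ 2 - 2 * (z⁻¹ * ⟪W, v⟫) + ‖W‖ ^ 2 := by
      rw [norm_sub_sq_real, norm_smul, real_inner_smul_left, real_inner_comm]
      rw [Real.norm_eq_abs, abs_of_pos (inv_pos.mpr hz)]
      ring
    constructor
    · intro h
      have h2 : ‖z⁻¹ • v - W‖ ^ 2 = 1 := by rw [h]; norm_num
      rw [hns] at h2
      field_simp at h2
      nlinarith
    · intro h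
      have h2 : ‖z⁻¹ • v - W‖ ^ 2 = 1 := by
        rw [hns]; field_simp; nlinarith
      have h3 := norm_nonneg (z⁻¹ • v - W)
      nlinarith
  have heq : ∀ v : V, v ≠ 0 →
      (1 - ‖W‖ ^ 2) * randers W v ^ 2 + 2 * ⟪W, v⟫ * randers W v - ‖v‖ ^ 2 = 0 := by
    intro v hv
    rw [hval v hv]
    have h1 := Real.sq_sqrt (hD v hv).le
    field_simp
    nlinarith
  refine ⟨fun v hv => ?_, ?_, ?_⟩
  · refine ⟨⟨hpos v hv, (key v _ (hpos v hv)).mpr (heq v hv)⟩, fun z hz hze => ?_⟩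
    have h1 := (key v z hz).mp hze
    have h2 := heq v hv
    have hfac : (z - randers W v) * ((1 - ‖W‖ ^ 2) * (z + randers W v) + 2 * ⟪W, v⟫) = 0 := by
      nlinarith [h1, h2]
    rcases mul_eq_zero.mp hfac with h | h
    · linarith
    · exfalso
      have hZ := hpos v hv
      have h3 := hsD' v hv
      have h4 : (1 - ‖W‖ ^ 2) * randers W v + ⟪W, v⟫ =
          Real.sqrt (⟪W, v⟫ ^ 2 + (1 - ‖W‖ ^ 2) * ‖v‖ ^ 2) := by
        rw [hval v hv]; field_simp; ring
      nlinarith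
  · -- smoothness
    intro v hv
    have hv' : v ≠ 0 := hv
    have hinner : ContDiff ℝ (⊤ : ℕ∞) (fun x : V => ⟪W, x⟫) := (innerSL ℝ W).contDiff
    have hnorm : ContDiff ℝ (⊤ : ℕ∞) (fun x : V => ‖x‖ ^ 2) := contDiff_norm_sq ℝ
    have hf : ContDiff ℝ (⊤ : ℕ∞) (fun x : V => ⟪W, x⟫ ^ 2 + (1 - ‖W‖ ^ 2) * ‖x‖ ^ 2) :=
      (hinner.pow 2).add (contDiff_const.mul hnorm)
    have hg : ContDiffAt ℝ (⊤ : ℕ∞) (fun x : V =>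
        (Real.sqrt (⟪W, x⟫ ^ 2 + (1 - ‖W‖ ^ 2) * ‖x‖ ^ 2) - ⟪W, x⟫) / (1 - ‖W‖ ^ 2)) v := by
      exact (((Real.contDiffAt_sqrt (hD v hv').ne').comp v hf.contDiffAt).sub
        hinner.contDiffAt).div_const _
    have hEq : randers W =ᶠ[nhds v] fun x : V =>
        (Real.sqrt (⟪W, x⟫ ^ 2 + (1 - ‖W‖ ^ 2) * ‖x‖ ^ 2) - ⟪W, x⟫) / (1 - ‖W‖ ^ 2) := by
      filter_upwards [isOpen_compl_singleton.mem_nhds hv] with x hx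
      exact hval x hx
    exact (hg.congr_of_eventuallyEq hEq).contDiffWithinAt
  · -- homogeneity
    intro c hcpos v hv
    have hcv : c • v ≠ 0 := smul_ne_zero hcpos.ne' hv
    rw [hval _ hcv, hval v hv, real_inner_smul_right, norm_smul, Real.norm_eq_abs,
      abs_of_pos hcpos]
    have h1 : (c * ⟪W, v⟫) ^ 2 + (1 - ‖W‖ ^ 2) * (c * ‖v‖) ^ 2 =
        c ^ 2 * (⟪W, v⟫ ^ 2 + (1 - ‖W‖ ^ 2) * ‖v‖ ^ 2) := by ring
    rw [h1, Real.sqrt_mul (sq_nonneg c), Real.sqrt_sq hcpos.le]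
    ring
end

section
/- Let (V, ⟨·,·⟩) be a finite-dimensional real inner product space, W ∈ V with ‖W‖ < 1, and Z the Randers norm with Zermelo data (⟨·,·⟩, W), with fundamental tensor g. The fundamental tensor of Z is positive definite at every nonzero vector: for every v ≠ 0, the symmetric bilinear form g_v(u,w) := (1/2)·∂²/∂t∂s [Z(v+tu+sw)²]|_{t=s=0} on V is positive definite (hence Z is a Minkowski norm). -/
open scoped RealInnerProductSpace
open Classical

/-!
The Randers norm is `‖T x‖ + β x` with `a = 1 - ‖W‖²`, `T x = a⁻¹ (⟪W, x⟫, √a x)` in `ℝ × V` with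
the `L²` norm (so `‖T x‖ = √(⟪W, x⟫² + a ‖x‖²) / a`) and `β = -⟪W, ·⟫ / a`.
For any `F = ‖T ·‖ + β`, restricting `F²` to the line `t ↦ v + t • u` and differentiating twice gives
`g_v(u, u) = (⟪T v, T u⟫ / ‖T v‖ + β u)² + F(v) (‖T v‖² ‖T u‖² - ⟪T v, T u⟫²) / ‖T v‖³`.
Writing `u = r v + w` with `T w ⊥ T v`, this is `(r F(v) + β w)² + F(v) ‖T w‖² / ‖T v‖`,
which is positive when `F(v) > 0`, `T` is injective and `u ≠ 0`: if `w = 0` then `r ≠ 0`.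
-/

open Filter Topology

section LineRestriction

variable {𝕜 E F : Type*} [NontriviallyNormedField 𝕜] [NormedAddCommGroup E] [NormedSpace 𝕜 E]
  [NormedAddCommGroup F] [NormedSpace 𝕜 F]

theorem iteratedFDeriv_two_apply_self_eq_deriv_deriv {f : E → F} {v : E}
    (hf : ContDiffAt 𝕜 2 f v) (u : E) :
    iteratedFDeriv 𝕜 2 f v ![u, u] = deriv (deriv fun t : 𝕜 => f (v + t • u)) 0 := by
  have hline : ∀ t : 𝕜, HasDerivAt (fun s : 𝕜 => v + s • u) u t := fun t => by
    simpa using ((hasDerivAt_id t).smul_const u).const_add v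
  have hnear : ∀ᶠ t in 𝓝 (0 : 𝕜), DifferentiableAt 𝕜 f (v + t • u) := by
    have hcont : Tendsto (fun t : 𝕜 => v + t • u) (𝓝 0) (𝓝 v) := by
      simpa using (hline 0).continuousAt.tendsto
    exact hcont.eventually ((hf.eventually (by simp)).mono fun x hx =>
      hx.differentiableAt (by simp))
  have hderiv : deriv (fun t : 𝕜 => f (v + t • u)) =ᶠ[𝓝 0]
      fun t => fderiv 𝕜 f (v + t • u) u :=
    hnear.mono fun t ht => (ht.hasFDerivAt.comp_hasDerivAt t (hline t)).deriv
  have hsecond : HasDerivAt (fun t : 𝕜 => fderiv 𝕜 f (v + t • u) u)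
      (fderiv 𝕜 (fderiv 𝕜 f) v u u) 0 := by
    have hD : HasFDerivAt (fderiv 𝕜 f) (fderiv 𝕜 (fderiv 𝕜 f) v) (v + (0 : 𝕜) • u) := by
      rw [zero_smul, add_zero]
      exact ((hf.fderiv_right (m := 1) le_rfl).differentiableAt one_ne_zero).hasFDerivAt
    have h1 : HasDerivAt (fun t : 𝕜 => fderiv 𝕜 f (v + t • u)) (fderiv 𝕜 (fderiv 𝕜 f) v u) 0 :=
      hD.comp_hasDerivAt (x := (0 : 𝕜)) (hline 0)
    have h := h1.clm_apply (hasDerivAt_const (0 : 𝕜) u)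
    rwa [ContinuousLinearMap.map_zero, add_zero] at h
  rw [iteratedFDeriv_two_apply, hderiv.deriv_eq, hsecond.deriv]
  simp

end LineRestriction

theorem deriv_deriv_sq {f f' : ℝ → ℝ} {f'' x : ℝ} (hf : ∀ᶠ y in 𝓝 x, HasDerivAt f (f' y) y)
    (hf' : HasDerivAt f' f'' x) :
    deriv (deriv fun y => f y ^ 2) x = 2 * (f' x ^ 2 + f x * f'') := by
  have hsq : deriv (fun y => f y ^ 2) =ᶠ[𝓝 x] fun y => 2 * (f y * f' y) :=
    hf.mono fun y hy => by rw [(hy.fun_pow 2).deriv]; ring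
  rw [hsq.deriv_eq, ((hf.self_of_nhds.fun_mul hf').const_mul 2).deriv]
  ring

section NormAlongLine

variable {E : Type*} [NormedAddCommGroup E] [InnerProductSpace ℝ E]

theorem hasDerivAt_norm_add_smul {a b : E} {t : ℝ} (h : a + t • b ≠ 0) :
    HasDerivAt (fun s : ℝ => ‖a + s • b‖) (⟪a + t • b, b⟫ / ‖a + t • b‖) t := by
  have hline : HasDerivAt (fun s : ℝ => a + s • b) b t := by
    simpa using ((hasDerivAt_id t).smul_const b).const_add a
  have hsq := hline.norm_sq.sqrt (pow_ne_zero 2 (norm_ne_zero_iff.2 h))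
  simp only [Real.sqrt_sq (norm_nonneg _)] at hsq
  convert hsq using 1
  field_simp

theorem hasDerivAt_inner_div_norm_add_smul {a b : E} (ha : a ≠ 0) :
    HasDerivAt (fun s : ℝ => ⟪a + s • b, b⟫ / ‖a + s • b‖)
      ((‖a‖ ^ 2 * ‖b‖ ^ 2 - ⟪a, b⟫ ^ 2) / ‖a‖ ^ 3) 0 := by
  have ha0 : a + (0 : ℝ) • b ≠ 0 := by simpa using ha
  have hinner : HasDerivAt (fun s : ℝ => ⟪a + s • b, b⟫) (‖b‖ ^ 2) 0 := by
    have h := ((hasDerivAt_id (0 : ℝ)).smul_const b).const_add a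
    simpa [real_inner_self_eq_norm_sq] using h.inner ℝ (hasDerivAt_const (0 : ℝ) b)
  refine (hinner.fun_div (hasDerivAt_norm_add_smul ha0) (by simpa using ha)).congr_deriv ?_
  have : ‖a‖ ≠ 0 := norm_ne_zero_iff.2 ha
  simp only [zero_smul, add_zero]
  field_simp

theorem norm_sq_mul_norm_sq_sub_inner_sq {a : E} (ha : a ≠ 0) (b : E) :
    ‖a‖ ^ 2 * ‖b‖ ^ 2 - ⟪a, b⟫ ^ 2 = ‖a‖ ^ 2 * ‖b - (⟪a, b⟫ / ‖a‖ ^ 2) • a‖ ^ 2 := by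
  have : ‖a‖ ≠ 0 := norm_ne_zero_iff.2 ha
  rw [norm_sub_sq_real, norm_smul, inner_smul_right, real_inner_comm, Real.norm_eq_abs, mul_pow,
    sq_abs]
  field_simp
  ring

theorem deriv_deriv_sq_norm_add_smul_add {a b : E} (ha : a ≠ 0) (c d : ℝ) :
    deriv (deriv fun t : ℝ => (‖a + t • b‖ + (c + t * d)) ^ 2) 0 =
      2 * ((⟪a, b⟫ / ‖a‖ + d) ^ 2
        + (‖a‖ + c) * ((‖a‖ ^ 2 * ‖b‖ ^ 2 - ⟪a, b⟫ ^ 2) / ‖a‖ ^ 3)) := by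
  have hnear : ∀ᶠ t in 𝓝 (0 : ℝ), a + t • b ≠ 0 :=
    ((continuous_const.add (continuous_id.smul continuous_const)).continuousAt).eventually_ne
      (by simpa using ha)
  rw [deriv_deriv_sq (f' := fun t => ⟪a + t • b, b⟫ / ‖a + t • b‖ + d)
    (hnear.mono fun t ht => (hasDerivAt_norm_add_smul ht).fun_add
      ((hasDerivAt_mul_const d).const_add c))
    ((hasDerivAt_inner_div_norm_add_smul ha).add_const d)]
  simp

end NormAlongLine

section RandersType

variable {V E : Type*} [NormedAddCommGroup V] [NormedSpace ℝ V]
  [NormedAddCommGroup E] [InnerProductSpace ℝ E]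

theorem fundamentalTensor_norm_add_apply_self (T : V →L[ℝ] E) (β : V →L[ℝ] ℝ) {v : V}
    (hv : T v ≠ 0) (u : V) :
    fundamentalTensor (fun x => ‖T x‖ + β x) v u u =
      (⟪T v, T u⟫ / ‖T v‖ + β u) ^ 2
        + (‖T v‖ + β v) * ((‖T v‖ ^ 2 * ‖T u‖ ^ 2 - ⟪T v, T u⟫ ^ 2) / ‖T v‖ ^ 3) := by
  have hC2 : ContDiffAt ℝ 2 (fun x => (‖T x‖ + β x) ^ 2) v :=
    ((T.contDiff.contDiffAt.norm ℝ hv).add β.contDiff.contDiffAt).pow 2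
  rw [fundamentalTensor, iteratedFDeriv_two_apply_self_eq_deriv_deriv hC2]
  simp only [map_add, map_smul, smul_eq_mul]
  rw [deriv_deriv_sq_norm_add_smul_add hv]
  ring

theorem fundamentalTensor_norm_add_pos {T : V →L[ℝ] E} (hT : Function.Injective T)
    (β : V →L[ℝ] ℝ) {v : V} (hv : 0 < ‖T v‖ + β v) {u : V} (hu : u ≠ 0) :
    0 < fundamentalTensor (fun x => ‖T x‖ + β x) v u u := by
  have hTv : T v ≠ 0 := by
    intro h
    rw [(map_eq_zero_iff T hT).1 h] at hv
    simp at hv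
  have hnv : ‖T v‖ ≠ 0 := norm_ne_zero_iff.2 hTv
  set r := ⟪T v, T u⟫ / ‖T v‖ ^ 2
  set w := u - r • v
  have hTw : T w = T u - r • T v := by simp [w]
  have hlin : ⟪T v, T u⟫ / ‖T v‖ + β u = r * (‖T v‖ + β v) + β w := by
    simp only [w, r, map_sub, map_smul, smul_eq_mul]
    field_simp
    ring
  rw [fundamentalTensor_norm_add_apply_self T β hTv, hlin,
    norm_sq_mul_norm_sq_sub_inner_sq hTv, ← hTw]
  rcases eq_or_ne w 0 with hw | hw
  · have hr : r ≠ 0 := by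
      rintro hr
      exact hu (by simpa [w, hr] using hw)
    simp only [hw, map_zero, norm_zero, add_zero]
    have := mul_ne_zero hr hv.ne'
    positivity
  · have hTw0 : 0 < ‖T w‖ := norm_pos_iff.2 fun h => hw (hT (h.trans (map_zero T).symm))
    exact add_pos_of_nonneg_of_pos (sq_nonneg _) (mul_pos hv (by positivity))

end RandersType

theorem one_sub_norm_sq_pos {E : Type*} [SeminormedAddGroup E] {W : E} (hW : ‖W‖ < 1) :
    0 < 1 - ‖W‖ ^ 2 :=
  sub_pos.2 (pow_lt_one₀ (norm_nonneg W) hW two_ne_zero)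

section Zermelo

variable {V : Type*} [NormedAddCommGroup V] [InnerProductSpace ℝ V]

noncomputable def zermeloEmbedding (W : V) : V →L[ℝ] WithLp 2 (ℝ × V) :=
  (1 - ‖W‖ ^ 2)⁻¹ • ((WithLp.prodContinuousLinearEquiv 2 ℝ ℝ V).symm.toContinuousLinearMap.comp
    ((innerSL ℝ W).prod (√(1 - ‖W‖ ^ 2) • ContinuousLinearMap.id ℝ V)))

theorem zermeloEmbedding_apply (W x : V) :
    zermeloEmbedding W x = (1 - ‖W‖ ^ 2)⁻¹ • WithLp.toLp 2 (⟪W, x⟫, √(1 - ‖W‖ ^ 2) • x) :=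
  rfl

theorem norm_zermeloEmbedding_apply {W : V} (hW : ‖W‖ < 1) (x : V) :
    ‖zermeloEmbedding W x‖ = √(⟪W, x⟫ ^ 2 + (1 - ‖W‖ ^ 2) * ‖x‖ ^ 2) / (1 - ‖W‖ ^ 2) := by
  have ha := one_sub_norm_sq_pos hW
  rw [zermeloEmbedding_apply, norm_smul, norm_inv, Real.norm_of_nonneg ha.le,
    WithLp.prod_norm_eq_of_L2, WithLp.toLp_fst, WithLp.toLp_snd, norm_smul,
    Real.norm_of_nonneg (Real.sqrt_nonneg _), mul_pow, Real.sq_sqrt ha.le, Real.norm_eq_abs, sq_abs]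
  ring

theorem zermeloEmbedding_injective {W : V} (hW : ‖W‖ < 1) :
    Function.Injective (zermeloEmbedding W) := by
  have ha := one_sub_norm_sq_pos hW
  refine (injective_iff_map_eq_zero _).2 fun x hx => ?_
  have hsnd := congrArg (fun p => (WithLp.ofLp p).2) hx
  simpa [zermeloEmbedding_apply, ha.ne', Real.sqrt_eq_zero', not_le.2 ha] using hsnd

theorem randers_eq_norm_zermeloEmbedding_add {W : V} (hW : ‖W‖ < 1) :
    randers W = fun x => ‖zermeloEmbedding W x‖ + (-(1 - ‖W‖ ^ 2)⁻¹ • innerSL ℝ W) x := by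
  funext x
  rw [randers, norm_zermeloEmbedding_apply hW]
  split_ifs with hx
  · simp [hx]
  · simp only [smul_apply, innerSL_apply_apply, smul_eq_mul]
    ring

theorem randers_pos {W : V} (hW : ‖W‖ < 1) {v : V} (hv : v ≠ 0) : 0 < randers W v := by
  have ha := one_sub_norm_sq_pos hW
  have hlt : ⟪W, v⟫ < √(⟪W, v⟫ ^ 2 + (1 - ‖W‖ ^ 2) * ‖v‖ ^ 2) :=
    Real.lt_sqrt_of_sq_lt (by nlinarith [mul_pos ha (pow_pos (norm_pos_iff.2 hv) 2)])
  rw [randers, if_neg hv]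
  exact div_pos (sub_pos.2 hlt) ha

end Zermelo

theorem randers_fundamentalTensor_posdef_general {V : Type*} [NormedAddCommGroup V]
    [InnerProductSpace ℝ V] (W : V) (hW : ‖W‖ < 1) :
    ∀ v : V, v ≠ 0 → ∀ u : V, u ≠ 0 → 0 < fundamentalTensor (randers W) v u u := by
  intro v hv u hu
  have hpos := randers_pos hW hv
  rw [randers_eq_norm_zermeloEmbedding_add hW] at hpos ⊢
  exact fundamentalTensor_norm_add_pos (zermeloEmbedding_injective hW) _ hpos hu

/-- The fundamental tensor of the Randers norm with Zermelo data `(⟪·,·⟫, W)`, `‖W‖ < 1`,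
is positive definite at every nonzero vector (hence the Randers norm is a Minkowski
norm). -/
theorem randers_fundamentalTensor_posdef {V : Type*} [NormedAddCommGroup V]
    [InnerProductSpace ℝ V] [FiniteDimensional ℝ V] (W : V) (hW : ‖W‖ < 1) :
    ∀ v : V, v ≠ 0 → ∀ u : V, u ≠ 0 → 0 < fundamentalTensor (randers W) v u u :=
  randers_fundamentalTensor_posdef_general W hW
end

section
/- Let F be a Minkowski norm on a finite-dimensional real vector space V. Let x ∈ V with x ≠ 0, and let w ∈ V satisfy: F(w) = 1, dF_x(w) > 0, and g_w(w,u) = 0 for every u in the kernel of the Fréchet derivative dF_x (i.e., w is a forward unit normal to the level set {F = F(x)} at x). Then w = x / F(x). In other words, the unit-speed geodesics of the Minkowski space (V,F) leaving the sphere {F = c} orthogonally in the outward direction are exactly the radial lines. -/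
/-- `F` is a Minkowski norm on the finite-dimensional real vector space `V`. -/
structure IsMinkowskiNorm {V : Type*} [NormedAddCommGroup V] [NormedSpace ℝ V]
    [FiniteDimensional ℝ V] (F : V → ℝ) : Prop where
  pos : ∀ v : V, v ≠ 0 → 0 < F v
  map_zero : F 0 = 0
  smooth : ContDiffOn ℝ (⊤ : ℕ∞) F {(0 : V)}ᶜ
  homog : ∀ c : ℝ, 0 < c → ∀ v : V, F (c • v) = c * F v
  posdef : ∀ v : V, v ≠ 0 → ∀ u : V, u ≠ 0 → 0 < fundamentalTensor F v u u

open Filter Topology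

section Aux

variable {V : Type*} [NormedAddCommGroup V] [NormedSpace ℝ V] [FiniteDimensional ℝ V]
  {F : V → ℝ}

lemma MK.contDiffAt (hF : IsMinkowskiNorm F) {v : V} (hv : v ≠ 0) : ContDiffAt ℝ (⊤ : ℕ∞) F v :=
  hF.smooth.contDiffAt (isOpen_compl_singleton.mem_nhds hv)

lemma MK.diffAt (hF : IsMinkowskiNorm F) {v : V} (hv : v ≠ 0) : DifferentiableAt ℝ F v :=
  (MK.contDiffAt hF hv).differentiableAt (by simp)

/-- Euler's identity: `dF_v(v) = F(v)`. -/
lemma MK.euler (hF : IsMinkowskiNorm F) {v : V} (hv : v ≠ 0) : fderiv ℝ F v v = F v := by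
  have h1 : HasDerivAt (fun t : ℝ => F (t • v)) (fderiv ℝ F v v) 1 := by
    have hγ : HasDerivAt (fun t : ℝ => t • v) v 1 := by
      simpa using (hasDerivAt_id (1:ℝ)).smul_const v
    have := (MK.diffAt hF hv).hasFDerivAt.comp_hasDerivAt_of_eq 1 hγ (by simp)
    exact this
  have h2 : HasDerivAt (fun t : ℝ => F (t • v)) (F v) 1 := by
    have hm : HasDerivAt (fun t : ℝ => t * F v) (F v) 1 := by
      simpa using (hasDerivAt_id (1:ℝ)).mul_const (F v)
    refine hm.congr_of_eventuallyEq ?_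
    filter_upwards [Ioi_mem_nhds (zero_lt_one (α := ℝ))] with t ht
    exact hF.homog t ht v
  exact h1.unique h2

/-- `dF` is invariant under positive scaling of the base point. -/
lemma MK.fderiv_homog (hF : IsMinkowskiNorm F) {v : V} (hv : v ≠ 0) {c : ℝ} (hc : 0 < c) :
    fderiv ℝ F (c • v) = fderiv ℝ F v := by
  have hcv : c • v ≠ 0 := smul_ne_zero hc.ne' hv
  have hL : HasFDerivAt (fun z : V => c • z) (c • ContinuousLinearMap.id ℝ V) v :=
    (c • ContinuousLinearMap.id ℝ V).hasFDerivAt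
  have h1 : HasFDerivAt (fun z : V => F (c • z))
      ((fderiv ℝ F (c • v)).comp (c • ContinuousLinearMap.id ℝ V)) v :=
    (MK.diffAt hF hcv).hasFDerivAt.comp v hL
  have h2 : HasFDerivAt (fun z : V => F (c • z)) (c • fderiv ℝ F v) v := by
    have hm : HasFDerivAt (fun z : V => c * F z) (c • fderiv ℝ F v) v := by
      simpa [smul_smul] using ((MK.diffAt hF hv).hasFDerivAt.const_mul c)
    refine hm.congr_of_eventuallyEq ?_
    exact Eventually.of_forall fun z => hF.homog c hc z
  have := h1.unique h2
  have h3 : (c : ℝ) • fderiv ℝ F (c • v) = c • fderiv ℝ F v := by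
    rw [← this]; ext u; simp [mul_comm]
  exact smul_right_injective _ hc.ne' h3

/-- Derivative of `G = F ^ 2`. -/
lemma MK.fderivG (hF : IsMinkowskiNorm F) {v : V} (hv : v ≠ 0) :
    fderiv ℝ (fun z => F z ^ 2) v = (2 * F v) • fderiv ℝ F v := by
  have h : HasFDerivAt (fun z => F z ^ 2)
      (F v • fderiv ℝ F v + F v • fderiv ℝ F v) v := by
    have := (MK.diffAt hF hv).hasFDerivAt.mul (MK.diffAt hF hv).hasFDerivAt
    refine HasFDerivAt.congr_of_eventuallyEq this (Eventually.of_forall fun z => ?_)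
    simp [sq]
  rw [h.fderiv]; rw [two_mul, add_smul]

/-- Differentiated Euler identity for `G = F²`:
`D²G_v(u, v) = DG_v(u)` for `v ≠ 0`. -/
lemma MK.snd_euler (hF : IsMinkowskiNorm F) {v : V} (hv : v ≠ 0) (u : V) :
    fderiv ℝ (fderiv ℝ (fun z => F z ^ 2)) v u v = fderiv ℝ (fun z => F z ^ 2) v u := by
  set G : V → ℝ := fun z => F z ^ 2 with hGdef
  set Φ : V → (V →L[ℝ] ℝ) := fderiv ℝ G with hΦdef
  have hGsm : ∀ z : V, z ≠ 0 → ContDiffAt ℝ (⊤ : ℕ∞) G z := fun z hz =>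
    (MK.contDiffAt hF hz).pow 2
  have hΦdiff : DifferentiableAt ℝ Φ v :=
    ((hGsm v hv).fderiv_right (m := 1) (by exact WithTop.coe_le_coe.2 le_top)).differentiableAt one_ne_zero
  -- the map z ↦ Φ z z has two expressions near v
  have h1 : HasFDerivAt (fun z => Φ z z)
      ((Φ v).comp (ContinuousLinearMap.id ℝ V) + (fderiv ℝ Φ v).flip v) v :=
    hΦdiff.hasFDerivAt.clm_apply (hasFDerivAt_id v)
  have h2 : HasFDerivAt (fun z => Φ z z) ((2 : ℝ) • Φ v) v := by
    have hm : HasFDerivAt (fun z => 2 * G z) ((2 : ℝ) • Φ v) v :=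
      ((hGsm v hv).differentiableAt (by simp)).hasFDerivAt.const_mul 2
    refine hm.congr_of_eventuallyEq ?_
    filter_upwards [isOpen_compl_singleton.mem_nhds hv] with z hz
    have hz' : z ≠ 0 := hz
    have : Φ z z = 2 * F z ^ 2 := by
      rw [hΦdef, hGdef, MK.fderivG hF hz']
      simp [MK.euler hF hz']; ring
    rw [this]
  have huniq := h1.unique h2
  have heq := congrArg (fun L : V →L[ℝ] ℝ => L u) huniq
  simp only [ContinuousLinearMap.add_apply, ContinuousLinearMap.coe_comp', Function.comp_apply,
    ContinuousLinearMap.coe_id', id_eq, ContinuousLinearMap.flip_apply,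
    ContinuousLinearMap.smul_apply, smul_eq_mul] at heq
  linarith

/-- The key identity `g_v(v, u) = F(v) · dF_v(u)`. -/
lemma MK.tensor_eq (hF : IsMinkowskiNorm F) {v : V} (hv : v ≠ 0) (u : V) :
    fundamentalTensor F v v u = F v * fderiv ℝ F v u := by
  have hG2 : ContDiffAt ℝ 2 (fun z => F z ^ 2) v :=
    ((MK.contDiffAt hF hv).pow 2).of_le (by exact WithTop.coe_le_coe.2 le_top)
  have hsymm : IsSymmSndFDerivAt ℝ (fun z => F z ^ 2) v := hG2.isSymmSndFDerivAt (by rw [minSmoothness_of_isRCLikeNormedField])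
  rw [fundamentalTensor, iteratedFDeriv_two_apply]
  have h0 : (![v, u] : Fin 2 → V) 0 = v := rfl
  have h1 : (![v, u] : Fin 2 → V) 1 = u := rfl
  rw [h0, h1, hsymm.eq v u, MK.snd_euler hF hv u, MK.fderivG hF hv]
  simp; ring

lemma MK.fderiv2_pos (hF : IsMinkowskiNorm F) {v : V} (hv : v ≠ 0) {d : V} (hd : d ≠ 0) :
    0 < fderiv ℝ (fderiv ℝ (fun z => F z ^ 2)) v d d := by
  have h := hF.posdef v hv d hd
  rw [fundamentalTensor, iteratedFDeriv_two_apply] at h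
  have h0 : (![d, d] : Fin 2 → V) 0 = d := rfl
  have h1 : (![d, d] : Fin 2 → V) 1 = d := rfl
  rw [h0, h1] at h
  linarith

end Aux

/-- If `w` is a forward unit normal at `x ≠ 0` to the level set `{F = F(x)}` (that is,
`F(w) = 1`, `dF_x(w) > 0`, and `g_w(w, u) = 0` for all `u`in the kernel of `dF_x`),
then `w = x / F(x)`: geodesics leaving the sphere orthogonally outward are radial. -/
theorem unit_normal_is_radial {V : Type*} [NormedAddCommGroup V] [NormedSpace ℝ V]
    [FiniteDimensional ℝ V] (F : V → ℝ) (hF : IsMinkowskiNorm F) (x : V) (hx : x ≠ 0)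
    (w : V) (hw : F w = 1) (hpos : 0 < fderiv ℝ F x w)
    (horth : ∀ u : V, fderiv ℝ F x u = 0 → fundamentalTensor F w w u = 0) :
    w = (F x)⁻¹ • x := by
  have hFx : 0 < F x := hF.pos x hx
  set y : V := (F x)⁻¹ • x with hy
  have hyx : fderiv ℝ F y = fderiv ℝ F x := MK.fderiv_homog hF hx (inv_pos.2 hFx)
  have hFy : F y = 1 := by
    rw [hy, hF.homog _ (inv_pos.2 hFx) x, inv_mul_cancel₀ hFx.ne']
  have hy0 : y ≠ 0 := by intro h; rw [h, hF.map_zero] at hFy; norm_num at hFy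
  have hw0 : w ≠ 0 := by intro h; rw [h, hF.map_zero] at hw; norm_num at hw
  set a : ℝ := fderiv ℝ F x w with ha
  have hdxy : fderiv ℝ F x y = 1 := by
    rw [hy, map_smul, MK.euler hF hx, smul_eq_mul, inv_mul_cancel₀ hFx.ne']
  -- `dF_w = a⁻¹ • dF_x`
  have hdw : ∀ u : V, fderiv ℝ F w u = a⁻¹ * fderiv ℝ F x u := by
    intro u
    have hu' : fderiv ℝ F x (u - (fderiv ℝ F x u / a) • w) = 0 := by
      rw [map_sub, map_smul, smul_eq_mul, ← ha]
      field_simp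
      ring
    have h0 := horth _ hu'
    rw [MK.tensor_eq hF hw0, hw, one_mul, map_sub, map_smul, smul_eq_mul,
      MK.euler hF hw0, hw, mul_one, sub_eq_zero] at h0
    rw [h0]; field_simp
  by_contra hne
  have hd : w - y ≠ 0 := sub_ne_zero.2 hne
  set d : V := w - y with hdd
  have hLd : fderiv ℝ F x d = a - 1 := by rw [hdd, map_sub, hdxy, ← ha]
  -- the segment from `y` to `w` avoids the origin
  have hz0 : ∀ t ∈ Set.Icc (0:ℝ) 1, y + t • d ≠ 0 := by
    intro t ht h0
    have := congrArg (fderiv ℝ F x) h0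
    simp only [map_add, map_zero, hdxy, map_smul, smul_eq_mul, hLd, MK.euler hF hx,
      inv_mul_cancel₀ hFx.ne'] at this
    obtain ⟨ht0, ht1⟩ := ht
    nlinarith [mul_nonneg ht0 hpos.le]
  set Φ : V → (V →L[ℝ] ℝ) := fderiv ℝ (fun z : V => F z ^ 2) with hΦdef
  set φ : ℝ → ℝ := fun t => Φ (y + t • d) d with hφ
  have hder : ∀ t ∈ Set.Icc (0:ℝ) 1, HasDerivAt φ (fderiv ℝ Φ (y + t • d) d d) t := by
    intro t ht
    have hΦdiff : DifferentiableAt ℝ Φ (y + t • d) :=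
      (((MK.contDiffAt hF (hz0 t ht)).pow 2).fderiv_right (m := 1)
        (by exact WithTop.coe_le_coe.2 le_top)).differentiableAt one_ne_zero
    have hzt : HasDerivAt (fun s : ℝ => y + s • d) d t := by
      simpa using ((hasDerivAt_id t).smul_const d).const_add y
    have hc : HasDerivAt (fun s : ℝ => Φ (y + s • d)) (fderiv ℝ Φ (y + t • d) d) t :=
      hΦdiff.hasFDerivAt.comp_hasDerivAt t hzt
    have := hc.clm_apply (hasDerivAt_const t d)
    simpa using this
  have hmono : StrictMonoOn φ (Set.Icc 0 1) := by
    refine strictMonoOn_of_deriv_pos (convex_Icc 0 1)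
      (fun t ht => (hder t ht).continuousAt.continuousWithinAt) (fun t ht => ?_)
    rw [interior_Icc] at ht
    have ht' : t ∈ Set.Icc (0:ℝ) 1 := ⟨ht.1.le, ht.2.le⟩
    rw [(hder t ht').deriv]
    exact MK.fderiv2_pos hF (hz0 t ht') hd
  have hlt := hmono (Set.left_mem_Icc.2 zero_le_one) (Set.right_mem_Icc.2 zero_le_one)
    zero_lt_one
  have hφ0 : φ 0 = 2 * (a - 1) := by
    rw [hφ]
    simp only [zero_smul, add_zero]
    rw [hΦdef, MK.fderivG hF hy0, hFy]
    simp only [ContinuousLinearMap.smul_apply, smul_eq_mul, hyx, hLd]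
    ring
  have hφ1 : φ 1 = 2 * (a⁻¹ * (a - 1)) := by
    have hyw : y + (1:ℝ) • d = w := by rw [hdd, one_smul]; abel
    rw [hφ]
    simp only [hyw]
    rw [hΦdef, MK.fderivG hF hw0, hw]
    simp only [ContinuousLinearMap.smul_apply, smul_eq_mul, hdw d, hLd]
    ring
  rw [hφ0, hφ1] at hlt
  have hinv : a * a⁻¹ = 1 := mul_inv_cancel₀ hpos.ne'
  nlinarith [hpos, sq_nonneg (a - 1)]
end
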